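/- Let K be a class of g.m.rings satisfying conditions (Q1) and (Q2). Then there exists a radical property r of g.m.rings such that K = {A | A is an r-semisimple g.m.ring}. -/

import Mathlib

/-!
Generalized matrix rings (g.m.rings) of a `Γ_I`-system, their g.m.ideals,
g.m.homomorphisms, quotients, and the general theory of radicals,
following Zhang, "The Baer radical of generalized matrix rings".
-/

universe u v w

set_option autoImplicit false
set_option maxHeartbeats 1000000

/-- A `Γ_I`-system: a family of additive abelian groups `A i j` (`i j : I`)
with multiplications `A i j × A j k → A i k`, additive in each variable and
associative. -/
structure GammaSystem (I : Type u) where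
  A : I → I → Type v
  [inst : ∀ i j, AddCommGroup (A i j)]
  mul : ∀ {i j k : I}, A i j → A j k → A i k
  add_mul : ∀ {i j k : I} (x y : A i j) (z : A j k), mul (x + y) z = mul x z + mul y z
  mul_add : ∀ {i j k : I} (w : A i j) (x y : A j k), mul w (x + y) = mul w x + mul w y
  mul_assoc : ∀ {l i j k : I} (w : A l i) (x : A i j) (z : A j k),
    mul w (mul x z) = mul (mul w x) z

attribute [instance] GammaSystem.inst

variable {I : Type u}

/-- The generalized matrix ring `A = Σ{A_{ij} | i,j ∈ I}` of a `Γ_I`-system: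
the external direct sum `⨁_{(i,j)} A i j` (finitely supported families). -/
abbrev GMRing (S : GammaSystem I) : Type (max u v) := Π₀ p : I × I, S.A p.1 p.2

namespace GammaSystem

variable (S : GammaSystem I)

lemma zero_mul' {i j k : I} (z : S.A j k) : S.mul (0 : S.A i j) z = 0 := by
  have h := S.add_mul (0 : S.A i j) 0 z
  rw [add_zero] at h
  exact (add_eq_left.mp h.symm)

lemma mul_zero' {i j k : I} (w : S.A i j) : S.mul w (0 : S.A j k) = 0 := by
  have h := S.mul_add w (0 : S.A j k) 0
  rw [add_zero] at h
  exact (add_eq_left.mp h.symm)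

lemma neg_mul' {i j k : I} (x : S.A i j) (z : S.A j k) :
    S.mul (-x) z = -(S.mul x z) := by
  have h := S.add_mul x (-x) z
  rw [add_neg_cancel, S.zero_mul'] at h
  exact (neg_eq_of_add_eq_zero_right h.symm).symm

lemma mul_neg' {i j k : I} (w : S.A i j) (x : S.A j k) :
    S.mul w (-x) = -(S.mul w x) := by
  have h := S.mul_add w x (-x)
  rw [add_neg_cancel, S.mul_zero'] at h
  exact (neg_eq_of_add_eq_zero_right h.symm).symm

-- Multiplication of generalized matrices: `(x*y)_{ij} = ∑_k x_{ik} y_{kj}`.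
open Classical in
noncomputable def gmul (x y : GMRing S) : GMRing S :=
  x.sum fun p a => y.sum fun q b =>
    if h : p.2 = q.1 then
      DFinsupp.single (p.1, q.2)
        (S.mul a (cast (congrArg (fun t => S.A t q.2) h.symm) b))
    else 0

open Classical in
lemma gmul_inner_zero (p : I × I) (a : S.A p.1 p.2) (q : I × I) :
    (if h : p.2 = q.1 then
      DFinsupp.single (p.1, q.2)
        (S.mul a (cast (congrArg (fun t => S.A t q.2) h.symm) (0 : S.A q.1 q.2)))
    else (0 : GMRing S)) = (0 : GMRing S) := by
  obtain ⟨p1, p2⟩ := p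
  obtain ⟨q1, q2⟩ := q
  by_cases h : p2 = q1
  · subst h
    simp [S.mul_zero']
  · simp [h]

open Classical in
lemma gmul_inner_add (p : I × I) (a : S.A p.1 p.2) (q : I × I) (b₁ b₂ : S.A q.1 q.2) :
    (if h : p.2 = q.1 then
      DFinsupp.single (p.1, q.2)
        (S.mul a (cast (congrArg (fun t => S.A t q.2) h.symm) (b₁ + b₂)))
    else (0 : GMRing S)) =
    (if h : p.2 = q.1 then
      DFinsupp.single (p.1, q.2)
        (S.mul a (cast (congrArg (fun t => S.A t q.2) h.symm) b₁))
    else (0 : GMRing S)) +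
    (if h : p.2 = q.1 then
      DFinsupp.single (p.1, q.2)
        (S.mul a (cast (congrArg (fun t => S.A t q.2) h.symm) b₂))
    else (0 : GMRing S)) := by
  obtain ⟨p1, p2⟩ := p
  obtain ⟨q1, q2⟩ := q
  by_cases h : p2 = q1
  · subst h
    simp [S.mul_add, DFinsupp.single_add]
  · simp [h]

open Classical in
lemma gmul_add (x y z : GMRing S) : S.gmul x (y + z) = S.gmul x y + S.gmul x z := by
  unfold gmul
  have : ∀ (p : I × I) (a : S.A p.1 p.2),
      (y + z).sum (fun q b =>
        if h : p.2 = q.1 then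
          DFinsupp.single (p.1, q.2)
            (S.mul a (cast (congrArg (fun t => S.A t q.2) h.symm) b))
        else (0 : GMRing S)) =
      y.sum (fun q b =>
        if h : p.2 = q.1 then
          DFinsupp.single (p.1, q.2)
            (S.mul a (cast (congrArg (fun t => S.A t q.2) h.symm) b))
        else (0 : GMRing S)) +
      z.sum (fun q b =>
        if h : p.2 = q.1 then
          DFinsupp.single (p.1, q.2)
            (S.mul a (cast (congrArg (fun t => S.A t q.2) h.symm) b))
        else (0 : GMRing S)) := by
    intro p a
    exact DFinsupp.sum_add_index (fun q => S.gmul_inner_zero p a q)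
      (fun q b₁ b₂ => S.gmul_inner_add p a q b₁ b₂)
  calc x.sum (fun p a => (y + z).sum fun q b =>
        if h : p.2 = q.1 then
          DFinsupp.single (p.1, q.2)
            (S.mul a (cast (congrArg (fun t => S.A t q.2) h.symm) b))
        else (0 : GMRing S))
      = x.sum (fun p a =>
          (y.sum fun q b =>
            if h : p.2 = q.1 then
              DFinsupp.single (p.1, q.2)
                (S.mul a (cast (congrArg (fun t => S.A t q.2) h.symm) b))
            else (0 : GMRing S)) +
          (z.sum fun q b =>
            if h : p.2 = q.1 then
              DFinsupp.single (p.1, q.2)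
                (S.mul a (cast (congrArg (fun t => S.A t q.2) h.symm) b))
            else (0 : GMRing S))) := by
        exact congrArg (DFinsupp.sum x) (funext fun p => funext fun a => this p a)
    _ = _ := DFinsupp.sum_add

open Classical in
lemma add_gmul (x y z : GMRing S) : S.gmul (x + y) z = S.gmul x z + S.gmul y z := by
  unfold gmul
  refine DFinsupp.sum_add_index (fun p => ?_) (fun p a₁ a₂ => ?_)
  · have : (fun (q : I × I) (b : S.A q.1 q.2) =>
        (if h : p.2 = q.1 then
          DFinsupp.single (p.1, q.2)
            (S.mul (0 : S.A p.1 p.2) (cast (congrArg (fun t => S.A t q.2) h.symm) b))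
        else (0 : GMRing S))) = fun q b => (0 : GMRing S) := by
      funext q b
      obtain ⟨p1, p2⟩ := p
      obtain ⟨q1, q2⟩ := q
      by_cases h : p2 = q1
      · subst h; simp [S.zero_mul']
      · simp [h]
    rw [congrArg (DFinsupp.sum z) this, DFinsupp.sum_zero]
  · have : (fun (q : I × I) (b : S.A q.1 q.2) =>
        (if h : p.2 = q.1 then
          DFinsupp.single (p.1, q.2)
            (S.mul (a₁ + a₂) (cast (congrArg (fun t => S.A t q.2) h.symm) b))
        else (0 : GMRing S))) = fun q b =>
        (if h : p.2 = q.1 then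
          DFinsupp.single (p.1, q.2)
            (S.mul a₁ (cast (congrArg (fun t => S.A t q.2) h.symm) b))
        else (0 : GMRing S)) +
        (if h : p.2 = q.1 then
          DFinsupp.single (p.1, q.2)
            (S.mul a₂ (cast (congrArg (fun t => S.A t q.2) h.symm) b))
        else (0 : GMRing S)) := by
      funext q b
      obtain ⟨p1, p2⟩ := p
      obtain ⟨q1, q2⟩ := q
      by_cases h : p2 = q1
      · subst h; simp [S.add_mul, DFinsupp.single_add]
      · simp [h]
    rw [congrArg (DFinsupp.sum z) this, DFinsupp.sum_add]

open Classical in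
lemma zero_gmul (y : GMRing S) : S.gmul 0 y = 0 := by
  unfold gmul
  exact DFinsupp.sum_zero_index

open Classical in
lemma gmul_zero (x : GMRing S) : S.gmul x 0 = 0 := by
  unfold gmul
  have : (fun (p : I × I) (a : S.A p.1 p.2) =>
      DFinsupp.sum (0 : GMRing S) (fun q b =>
        if h : p.2 = q.1 then
          DFinsupp.single (p.1, q.2)
            (S.mul a (cast (congrArg (fun t => S.A t q.2) h.symm) b))
        else (0 : GMRing S))) = fun p a => (0 : GMRing S) := by
    funext p a
    exact DFinsupp.sum_zero_index
  rw [congrArg (DFinsupp.sum x) this, DFinsupp.sum_zero]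

open Classical in
lemma gmul_single (p : I × I) (a : S.A p.1 p.2) (y : GMRing S) :
    S.gmul (DFinsupp.single p a) y =
      y.sum fun q b =>
        if h : p.2 = q.1 then
          DFinsupp.single (p.1, q.2)
            (S.mul a (cast (congrArg (fun t => S.A t q.2) h.symm) b))
        else 0 := by
  unfold gmul
  refine DFinsupp.sum_single_index ?_
  have : (fun (q : I × I) (b : S.A q.1 q.2) =>
      (if h : p.2 = q.1 then
        DFinsupp.single (p.1, q.2)
          (S.mul (0 : S.A p.1 p.2) (cast (congrArg (fun t => S.A t q.2) h.symm) b))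
      else (0 : GMRing S))) = fun q b => (0 : GMRing S) := by
    funext q b
    obtain ⟨p1, p2⟩ := p; obtain ⟨q1, q2⟩ := q
    by_cases h : p2 = q1
    · subst h; simp [S.zero_mul']
    · simp [h]
  rw [congrArg (DFinsupp.sum y) this, DFinsupp.sum_zero]

open Classical in
lemma gmul_single_single (p q : I × I) (a : S.A p.1 p.2) (b : S.A q.1 q.2) :
    S.gmul (DFinsupp.single p a) (DFinsupp.single q b) =
      if h : p.2 = q.1 then
        DFinsupp.single (p.1, q.2)
          (S.mul a (cast (congrArg (fun t => S.A t q.2) h.symm) b))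
      else 0 := by
  rw [S.gmul_single]
  exact DFinsupp.sum_single_index (S.gmul_inner_zero p a q)

open Classical in
lemma gmul_single_assoc (p q r : I × I) (a : S.A p.1 p.2) (b : S.A q.1 q.2)
    (c : S.A r.1 r.2) :
    S.gmul (S.gmul (DFinsupp.single p a) (DFinsupp.single q b)) (DFinsupp.single r c) =
    S.gmul (DFinsupp.single p a) (S.gmul (DFinsupp.single q b) (DFinsupp.single r c)) := by
  obtain ⟨p1, p2⟩ := p; obtain ⟨q1, q2⟩ := q; obtain ⟨r1, r2⟩ := r
  by_cases h1 : p2 = q1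
  · subst h1
    by_cases h2 : q2 = r1
    · subst h2
      rw [S.gmul_single_single (p1, p2) (p2, q2) a b, dif_pos rfl,
        S.gmul_single_single (p2, q2) (q2, r2) b c, dif_pos rfl,
        S.gmul_single_single (p1, q2) (q2, r2) _ c, dif_pos rfl,
        S.gmul_single_single (p1, p2) (p2, r2) a _, dif_pos rfl]
      show DFinsupp.single (p1, r2) _ = DFinsupp.single (p1, r2) _
      rw [show (cast (congrArg (fun t => S.A t q2) (Eq.symm rfl)) b) = b from rfl,
        show (cast (congrArg (fun t => S.A t r2) (Eq.symm rfl)) c) = c from rfl]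
      exact congrArg _ (S.mul_assoc a b c).symm
    · rw [S.gmul_single_single (p1, p2) (p2, q2) a b, dif_pos rfl,
        S.gmul_single_single (p2, q2) (r1, r2) b c, dif_neg h2,
        S.gmul_single_single (p1, q2) (r1, r2) _ c, dif_neg h2, S.gmul_zero]
  · by_cases h2 : q2 = r1
    · subst h2
      rw [S.gmul_single_single (p1, p2) (q1, q2) a b, dif_neg h1,
        S.gmul_single_single (q1, q2) (q2, r2) b c, dif_pos rfl,
        S.gmul_single_single (p1, p2) (q1, r2) a _, dif_neg h1, S.zero_gmul]
    · rw [S.gmul_single_single (p1, p2) (q1, q2) a b, dif_neg h1,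
        S.gmul_single_single (q1, q2) (r1, r2) b c, dif_neg h2,
        S.zero_gmul, S.gmul_zero]

open Classical in
lemma gmul_single_single_assoc' (p q : I × I) (a : S.A p.1 p.2) (b : S.A q.1 q.2)
    (z : GMRing S) :
    S.gmul (S.gmul (DFinsupp.single p a) (DFinsupp.single q b)) z =
    S.gmul (DFinsupp.single p a) (S.gmul (DFinsupp.single q b) z) := by
  induction z using DFinsupp.induction with
  | h0 => simp only [S.gmul_zero, S.zero_gmul]
  | ha r c f hf hc ih =>
      rw [S.gmul_add, S.gmul_add, S.gmul_add, ih, S.gmul_single_assoc]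

open Classical in
lemma gmul_single_assoc'' (p : I × I) (a : S.A p.1 p.2) (y z : GMRing S) :
    S.gmul (S.gmul (DFinsupp.single p a) y) z =
    S.gmul (DFinsupp.single p a) (S.gmul y z) := by
  induction y using DFinsupp.induction with
  | h0 => simp only [S.gmul_zero, S.zero_gmul]
  | ha q b f hf hb ih =>
      rw [S.gmul_add, S.add_gmul, S.add_gmul, S.gmul_add, ih,
        S.gmul_single_single_assoc']

open Classical in
lemma gmul_assoc (x y z : GMRing S) :
    S.gmul (S.gmul x y) z = S.gmul x (S.gmul y z) := by
  induction x using DFinsupp.induction with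
  | h0 => simp only [S.gmul_zero, S.zero_gmul]
  | ha p a f hf ha ih =>
      rw [S.add_gmul, S.add_gmul, S.add_gmul, ih, S.gmul_single_assoc'']

noncomputable instance : NonUnitalNonAssocRing (GMRing S) :=
  { (inferInstance : AddCommGroup (GMRing S)) with
    mul := S.gmul
    left_distrib := S.gmul_add
    right_distrib := fun x y z => S.add_gmul x y z
    zero_mul := S.zero_gmul
    mul_zero := S.gmul_zero }

/-- The generalized matrix ring is a (possibly non-unital) associative ring. -/
noncomputable instance : NonUnitalRing (GMRing S) :=
  { (inferInstance : NonUnitalNonAssocRing (GMRing S)) with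
    mul_assoc := S.gmul_assoc }

/-- A `Γ_I`-system (g.m.ring) is zero if all its components are zero. -/
def IsZero : Prop := ∀ (i j : I) (x : S.A i j), x = 0

/-- `x ∈ A_{ij}` is `m`-nilpotent in the `A_{ji}`-ring `A_{ij}`: every
`m`-sequence `a_{n+1} = a_n u_n a_n` (`u_n ∈ A_{ji}`) with `a_1 = x`
satisfies `a_k = 0` for some `k`. -/
def MNilpotent (i j : I) (x : S.A i j) : Prop :=
  ∀ a : ℕ → S.A i j, a 0 = x →
    (∀ n, ∃ u : S.A j i, a (n + 1) = S.mul (S.mul (a n) u) (a n)) →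
    ∃ k, a k = 0

/-- The Baer radical `r_b(A_{ij})` of the `A_{ji}`-ring `A_{ij}`: the set of
its `m`-nilpotent elements. -/
def componentBaer (i j : I) : Set (S.A i j) := { x | S.MNilpotent i j x }

end GammaSystem

section RingNotions

variable (R : Type w) [NonUnitalRing R]

/-- A two-sided ideal `P` of a (possibly non-unital) ring is prime if
`BC ⊆ P` implies `B ⊆ P` or `C ⊆ P`. -/
def TwoSidedIdeal.IsPrimeIdeal {R : Type w} [NonUnitalRing R]
    (P : TwoSidedIdeal R) : Prop :=
  ∀ B C : TwoSidedIdeal R, (∀ b ∈ B, ∀ c ∈ C, b * c ∈ P) → B ≤ P ∨ C ≤ P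

/-- The Baer radical of a (possibly non-unital) ring: the intersection of all
prime two-sided ideals. -/
def baerRadical : Set R := { x | ∀ P : TwoSidedIdeal R, P.IsPrimeIdeal → x ∈ P }

/-- `x` is an `m`-nilpotent element of the ring `R`: every `m`-sequence
`a_{n+1} = a_n u_n a_n` (`u_n ∈ R`) with `a_1 = x` reaches `0`. -/
def IsMNilpotent {R : Type w} [NonUnitalRing R] (x : R) : Prop :=
  ∀ a : ℕ → R, a 0 = x → (∀ n, ∃ u : R, a (n + 1) = a n * u * a n) → ∃ k, a k = 0

/-- `x` is `m`-nilpotent in the subring given by the subset `T` of `R`: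
every `m`-sequence lying in `T`, with multipliers `u_n ∈ T`, starting at `x`,
reaches `0`. -/
def IsMNilpotentIn {R : Type w} [NonUnitalRing R] (T : Set R) (x : R) : Prop :=
  ∀ a : ℕ → R, (∀ n, a n ∈ T) → a 0 = x →
    (∀ n, ∃ u ∈ T, a (n + 1) = a n * u * a n) → ∃ k, a k = 0

/-- A ring is prime if `BC = 0` implies `B = 0` or `C = 0` for all two-sided
ideals `B, C`. -/
def IsPrimeRing : Prop :=
  ∀ B C : TwoSidedIdeal R, (∀ b ∈ B, ∀ c ∈ C, b * c = 0) → B = ⊥ ∨ C = ⊥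

/-- A ring is semiprime if `B·B = 0` implies `B = 0` for every two-sided
ideal `B`. -/
def IsSemiprimeRing : Prop :=
  ∀ B : TwoSidedIdeal R, (∀ x ∈ B, ∀ y ∈ B, x * y = 0) → B = ⊥

/-- The annihilator `B* = {x ∈ R | xB = Bx = 0}` of a two-sided ideal. -/
def TwoSidedIdeal.annihilator {R : Type w} [NonUnitalRing R]
    (B : TwoSidedIdeal R) : TwoSidedIdeal R :=
  TwoSidedIdeal.mk' { x | ∀ b ∈ B, x * b = 0 ∧ b * x = 0 }
    (fun b hb => ⟨zero_mul b, mul_zero b⟩)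
    (fun {x y} hx hy b hb =>
      ⟨by rw [add_mul, (hx b hb).1, (hy b hb).1, add_zero],
       by rw [mul_add, (hx b hb).2, (hy b hb).2, add_zero]⟩)
    (fun {x} hx b hb =>
      ⟨by rw [neg_mul, (hx b hb).1, neg_zero],
       by rw [mul_neg, (hx b hb).2, neg_zero]⟩)
    (fun {x y} hy b hb => by
      refine ⟨?_, ?_⟩
      · rw [mul_assoc, (hy b hb).1, mul_zero]
      · rw [← mul_assoc]
        exact (hy (b * x) (B.mul_mem_right b x hb)).2)
    (fun {x y} hx b hb => by
      refine ⟨?_, ?_⟩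
      · rw [mul_assoc]
        exact (hx (y * b) (B.mul_mem_left y b hb)).1
      · rw [← mul_assoc, (hx b hb).2, zero_mul])

end RingNotions

/-- A g.m.ideal of the g.m.ring of `S`: a family of additive subgroups
`B i j ≤ A i j` with `B_{ij} A_{jk} ⊆ B_{ik}` and `A_{ij} B_{jk} ⊆ B_{ik}`. -/
structure GMIdeal (S : GammaSystem I) where
  B : ∀ i j : I, AddSubgroup (S.A i j)
  mul_mem_right : ∀ {i j k : I} (x : S.A i j) (z : S.A j k), x ∈ B i j → S.mul x z ∈ B i k
  mul_mem_left : ∀ {i j k : I} (x : S.A i j) (z : S.A j k), z ∈ B j k → S.mul x z ∈ B i k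

namespace GMIdeal

variable {S : GammaSystem I} (N : GMIdeal S)

/-- The subset of the g.m.ring consisting of the generalized matrices all of
whose components lie in the g.m.ideal `N`. -/
def carrier : Set (GMRing S) := { x | ∀ p : I × I, x p ∈ N.B p.1 p.2 }

/-- A g.m.ideal is zero if all its components are the zero subgroup. -/
def IsZero : Prop := ∀ i j : I, N.B i j = ⊥

/-- A g.m.ideal regarded as a g.m.ring (a `Γ_I`-system) in its own right. -/
def toSystem : GammaSystem I where
  A i j := N.B i j
  inst i j := inferInstance
  mul {i j k} x z := ⟨S.mul x.1 z.1, N.mul_mem_right x.1 z.1 x.2⟩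
  add_mul x y z := Subtype.ext (S.add_mul x.1 y.1 z.1)
  mul_add w x y := Subtype.ext (S.mul_add w.1 x.1 y.1)
  mul_assoc w x z := Subtype.ext (S.mul_assoc w.1 x.1 z.1)

/-- The quotient g.m.ring `A//B`, with components `A_{ij}/B_{ij}`. -/
def quotSystem : GammaSystem I where
  A i j := S.A i j ⧸ N.B i j
  inst i j := inferInstance
  mul {i j k} x z :=
    Quotient.liftOn₂' x z
      (fun a b => ((S.mul a b : S.A i k) : S.A i k ⧸ N.B i k))
      (by
        intro a₁ a₂ b₁ b₂ h₁ h₂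
        replace h₁ := (QuotientAddGroup.leftRel_apply).mp h₁
        replace h₂ := (QuotientAddGroup.leftRel_apply).mp h₂
        refine (QuotientAddGroup.eq).mpr ?_
        have : -(S.mul a₁ a₂) + S.mul b₁ b₂ =
            S.mul (-a₁ + b₁) a₂ + S.mul b₁ (-a₂ + b₂) := by
          rw [S.add_mul, S.mul_add, S.neg_mul', S.mul_neg']
          abel
        rw [this]
        exact add_mem (N.mul_mem_right _ _ h₁) (N.mul_mem_left _ _ h₂))
  add_mul {i j k} x y z := by
    refine Quotient.inductionOn₃' x y z ?_
    intro a b c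
    show ((S.mul (a + b) c : S.A i k) : S.A i k ⧸ N.B i k) = _
    rw [S.add_mul]
    rfl
  mul_add {i j k} w x y := by
    refine Quotient.inductionOn₃' w x y ?_
    intro a b c
    show ((S.mul a (b + c) : S.A i k) : S.A i k ⧸ N.B i k) = _
    rw [S.mul_add]
    rfl
  mul_assoc {l i j k} w x z := by
    refine Quotient.inductionOn₃' w x z ?_
    intro a b c
    show ((S.mul a (S.mul b c) : S.A l k) : S.A l k ⧸ N.B l k) = _
    rw [S.mul_assoc]
    rfl

/-- The annihilator g.m.ideal `B* = {x ∈ A | xB = Bx = 0}` of a g.m.ideal. -/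
def ann : GMIdeal S where
  B i j :=
    { carrier := { x | (∀ (k : I) (b : S.A j k), b ∈ N.B j k → S.mul x b = 0) ∧
        (∀ (k : I) (b : S.A k i), b ∈ N.B k i → S.mul b x = 0) }
      add_mem' := by
        rintro x y ⟨hx₁, hx₂⟩ ⟨hy₁, hy₂⟩
        refine ⟨fun k b hb => ?_, fun k b hb => ?_⟩
        · rw [S.add_mul, hx₁ k b hb, hy₁ k b hb, add_zero]
        · rw [S.mul_add, hx₂ k b hb, hy₂ k b hb, add_zero]
      zero_mem' := ⟨fun k b _ => S.zero_mul' b, fun k b _ => S.mul_zero' b⟩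
      neg_mem' := by
        rintro x ⟨hx₁, hx₂⟩
        refine ⟨fun k b hb => ?_, fun k b hb => ?_⟩
        · rw [S.neg_mul', hx₁ k b hb, neg_zero]
        · rw [S.mul_neg', hx₂ k b hb, neg_zero] }
  mul_mem_right := by
    rintro i j k x z ⟨hx₁, hx₂⟩
    refine ⟨fun m b hb => ?_, fun m b hb => ?_⟩
    · rw [← S.mul_assoc]
      exact hx₁ m (S.mul z b) (N.mul_mem_left z b hb)
    · rw [S.mul_assoc, hx₂ m b hb, S.zero_mul']
  mul_mem_left := by
    rintro i j k x z ⟨hz₁, hz₂⟩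
    refine ⟨fun m b hb => ?_, fun m b hb => ?_⟩
    · rw [← S.mul_assoc, hz₁ m b hb, S.mul_zero']
    · rw [S.mul_assoc]
      exact hz₂ m (S.mul b x) (N.mul_mem_right b x hb)

/-- `N` is a "Baer radical" g.m.ideal: every element of the ring `N` is
`m`-nilpotent in the ring `N`. -/
def IsBaerGMIdeal : Prop := ∀ x ∈ N.carrier, IsMNilpotentIn N.carrier x

end GMIdeal

/-- A g.m.homomorphism between two g.m.rings over the same index set. -/
structure GMHom (S T : GammaSystem I) where
  f : ∀ i j : I, S.A i j → T.A i j
  map_add : ∀ {i j : I} (x y : S.A i j), f i j (x + y) = f i j x + f i j y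
  map_mul : ∀ {i j k : I} (x : S.A i j) (z : S.A j k),
    f i k (S.mul x z) = T.mul (f i j x) (f j k z)

/-- A g.m.homomorphism is surjective if each component map is onto. -/
def GMHom.Surjective {S T : GammaSystem I} (ψ : GMHom S T) : Prop :=
  ∀ i j : I, Function.Surjective (ψ.f i j)

/-- The componentwise intersection `\bar r_b(A)` of all g.m.ideals `B` of `A`
such that the quotient ring `A//B` is a prime ring. -/
def gmBarBaer (S : GammaSystem I) : Set (GMRing S) :=
  { x | ∀ B : GMIdeal S, IsPrimeRing (GMRing B.quotSystem) →
      ∀ p : I × I, x p ∈ B.B p.1 p.2 }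

section RadicalTheory

/-- `N` is the largest g.m.ideal of `S` belonging (as a g.m.ring) to the
class `r`. -/
def IsLargestRadicalIdeal (r : ∀ I₀ : Type u, GammaSystem.{u, v} I₀ → Prop)
    {I : Type u} (S : GammaSystem I) (N : GMIdeal S) : Prop :=
  r I N.toSystem ∧ ∀ M : GMIdeal S, r I M.toSystem → ∀ i j : I, M.B i j ≤ N.B i j

/-- `r` is a radical property of g.m.rings: (R1) closure under surjective
g.m.homomorphic images; (R2) every g.m.ring has a largest `r`-g.m.ideal `r(A)`;
(R3) `A//r(A)` has no non-zero `r`-g.m.ideal. -/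
def IsGMRadicalProperty (r : ∀ I₀ : Type u, GammaSystem.{u, v} I₀ → Prop) : Prop :=
  (∀ (I₀ : Type u) (S T : GammaSystem I₀) (ψ : GMHom S T),
      ψ.Surjective → r I₀ S → r I₀ T) ∧
  (∀ (I₀ : Type u) (S : GammaSystem I₀), ∃ N : GMIdeal S,
      IsLargestRadicalIdeal r S N ∧
      ∀ P : GMIdeal N.quotSystem, r I₀ P.toSystem → P.IsZero)

/-- `S` is `r`-semisimple: `r(S) = 0`, i.e. every `r`-g.m.ideal of `S` is zero. -/
def GMSemisimple (r : ∀ I₀ : Type u, GammaSystem.{u, v} I₀ → Prop)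
    {I : Type u} (S : GammaSystem I) : Prop :=
  ∀ N : GMIdeal S, r I N.toSystem → N.IsZero

/-- `S` can be g.m.homomorphically mapped onto a non-zero member of the
class `K`. -/
def MapsOntoNonzeroMember (K : ∀ I₀ : Type u, GammaSystem.{u, v} I₀ → Prop)
    {I : Type u} (S : GammaSystem I) : Prop :=
  ∃ (T : GammaSystem.{u, v} I) (ψ : GMHom S T),
    ψ.Surjective ∧ ¬ T.IsZero ∧ K I T

/-- Condition (Q1): every non-zero g.m.ideal of any member of `K` can be
g.m.homomorphically mapped onto a non-zero member of `K`. -/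
def Q1Cond (K : ∀ I₀ : Type u, GammaSystem.{u, v} I₀ → Prop) : Prop :=
  ∀ (I₀ : Type u) (S : GammaSystem I₀), K I₀ S →
    ∀ N : GMIdeal S, ¬ N.IsZero → MapsOntoNonzeroMember K N.toSystem

/-- Condition (Q2): if every non-zero g.m.ideal of `A` can be
g.m.homomorphically mapped onto a non-zero member of `K`, then `A ∈ K`. -/
def Q2Cond (K : ∀ I₀ : Type u, GammaSystem.{u, v} I₀ → Prop) : Prop :=
  ∀ (I₀ : Type u) (S : GammaSystem I₀),
    (∀ N : GMIdeal S, ¬ N.IsZero → MapsOntoNonzeroMember K N.toSystem) → K I₀ S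

/-- The radical class of the upper radical `r^K` determined by `K`: the
g.m.rings which cannot be g.m.homomorphically mapped onto a non-zero member
of `K`. -/
def UpperRadicalClass (K : ∀ I₀ : Type u, GammaSystem.{u, v} I₀ → Prop)
    (I : Type u) (S : GammaSystem I) : Prop :=
  ¬ MapsOntoNonzeroMember K S

/-- A g.m.weakly special class: (WS1) every member is a semiprime ring;
(WS2) g.m.ideals of members are members; (WS3) if a g.m.ideal `B` of `A`
is in the class, then `A//B*` is in the class. -/
def IsGMWeaklySpecial (K : ∀ I₀ : Type u, GammaSystem.{u, v} I₀ → Prop) : Prop :=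
  (∀ (I₀ : Type u) (S : GammaSystem I₀), K I₀ S → IsSemiprimeRing (GMRing S)) ∧
  (∀ (I₀ : Type u) (S : GammaSystem I₀) (B : GMIdeal S), K I₀ S → K I₀ B.toSystem) ∧
  (∀ (I₀ : Type u) (S : GammaSystem I₀) (B : GMIdeal S),
      K I₀ B.toSystem → K I₀ B.ann.quotSystem)

/-- A g.m.special class: (S1) every member is a prime ring;
(S2) g.m.ideals of members are members; (S3) if a g.m.ideal `B` of `A`
is in the class, then `A//B*` is in the class. -/
def IsGMSpecial (K : ∀ I₀ : Type u, GammaSystem.{u, v} I₀ → Prop) : Prop :=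
  (∀ (I₀ : Type u) (S : GammaSystem I₀), K I₀ S → IsPrimeRing (GMRing S)) ∧
  (∀ (I₀ : Type u) (S : GammaSystem I₀) (B : GMIdeal S), K I₀ S → K I₀ B.toSystem) ∧
  (∀ (I₀ : Type u) (S : GammaSystem I₀) (B : GMIdeal S),
      K I₀ B.toSystem → K I₀ B.ann.quotSystem)

end RadicalTheory

section RingClasses

/-- A weakly special class of (possibly non-unital) rings: members are
semiprime, two-sided ideals of members are members (as rings), and if a
two-sided ideal `B` of `A` is a member then `A/B*` is a member. -/
def IsWeaklySpecialRingClass (K : ∀ (R : Type w) [NonUnitalRing R], Prop) : Prop :=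
  (∀ (R : Type w) [NonUnitalRing R], K R → IsSemiprimeRing R) ∧
  (∀ (R : Type w) [NonUnitalRing R] (B : TwoSidedIdeal R), K R → K B) ∧
  (∀ (R : Type w) [NonUnitalRing R] (B : TwoSidedIdeal R),
      K B → K B.annihilator.ringCon.Quotient)

/-- A special class of rings: a weakly special class all of whose members are
prime rings. -/
def IsSpecialRingClass (K : ∀ (R : Type w) [NonUnitalRing R], Prop) : Prop :=
  (∀ (R : Type w) [NonUnitalRing R], K R → IsPrimeRing R) ∧
  (∀ (R : Type w) [NonUnitalRing R] (B : TwoSidedIdeal R), K R → K B) ∧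
  (∀ (R : Type w) [NonUnitalRing R] (B : TwoSidedIdeal R),
      K B → K B.annihilator.ringCon.Quotient)

/-- The (upper) radical of the ring `R` determined by a class `K` of rings:
the intersection of all two-sided ideals `B` with `R/B ∈ K`. -/
def ringRadical (K : ∀ (R : Type w) [NonUnitalRing R], Prop)
    (R : Type w) [NonUnitalRing R] : Set R :=
  { x | ∀ B : TwoSidedIdeal R, K B.ringCon.Quotient → x ∈ B }

/-- A radical property of rings: closure under surjective homomorphic images,
existence of a largest `r`-ideal, and `r`-semisimplicity of the quotient by it. -/
def IsRingRadicalProperty (K : ∀ (R : Type w) [NonUnitalRing R], Prop) : Prop :=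
  (∀ (R S : Type w) [NonUnitalRing R] [NonUnitalRing S] (f : R →ₙ+* S),
      Function.Surjective f → K R → K S) ∧
  (∀ (R : Type w) [NonUnitalRing R], ∃ B : TwoSidedIdeal R,
      K B ∧ (∀ C : TwoSidedIdeal R, K C → C ≤ B) ∧
      ∀ D : TwoSidedIdeal B.ringCon.Quotient, K D → D = ⊥)

end RingClasses

/-- An ideal of the `A_{ts}`-ring `A_{st}` (a `Γ`-ring with `M = A_{st}`,
`Γ = A_{ts}`): an additive subgroup `B` with `B·A_{ts}·A_{st} ⊆ B` and
`A_{st}·A_{ts}·B ⊆ B`. -/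
structure GammaIdeal (S : GammaSystem I) (s t : I) where
  carrier : AddSubgroup (S.A s t)
  mul_mem_right : ∀ b ∈ carrier, ∀ (u : S.A t s) (y : S.A s t),
    S.mul (S.mul b u) y ∈ carrier
  mul_mem_left : ∀ (x : S.A s t) (u : S.A t s), ∀ b ∈ carrier,
    S.mul (S.mul x u) b ∈ carrier


/-
`K` is the semisimple class of its upper radical `r^K = UpperRadicalClass K`: the g.m.rings
with no surjection onto a non-zero member of `K`. The point where (Q1) enters is that a
surjection `ψ : A → T ∈ K` kills every `r^K`-g.m.ideal `M` of `A`: otherwise `ψ(M)` is a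
non-zero g.m.ideal of `T`, and (Q1) lets `M` map onto a non-zero member of `K`. Hence the sum
`r^K(A)` of all `r^K`-g.m.ideals is again in `r^K`, and `r^K` is closed under extensions, which
gives (R3). Finally (Q1) makes members of `K` semisimple and (Q2) gives the converse.
-/

section UpperRadical

variable {I : Type u}

namespace GMHom

variable {S T U : GammaSystem.{u, v} I}

def toAddMonoidHom (ψ : GMHom S T) (i j : I) : S.A i j →+ T.A i j :=
  AddMonoidHom.mk' (ψ.f i j) ψ.map_add

def comp (φ : GMHom T U) (ψ : GMHom S T) : GMHom S U where
  f i j x := φ.f i j (ψ.f i j x)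
  map_add x y := by rw [ψ.map_add, φ.map_add]
  map_mul x z := by rw [ψ.map_mul, φ.map_mul]

lemma Surjective.comp {φ : GMHom T U} {ψ : GMHom S T} (hφ : φ.Surjective)
    (hψ : ψ.Surjective) : (φ.comp ψ).Surjective :=
  fun i j => (hφ i j).comp (hψ i j)

lemma map_eq_map_of_ker_le {π : GMHom S U} {ψ : GMHom S T}
    (hker : ∀ (i j : I) (x : S.A i j), π.f i j x = 0 → ψ.f i j x = 0) {i j : I}
    {a b : S.A i j} (hab : π.f i j a = π.f i j b) : ψ.f i j a = ψ.f i j b := by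
  have hπ : π.toAddMonoidHom i j (a - b) = 0 := by
    rw [map_sub, sub_eq_zero]
    exact hab
  have hψ : ψ.toAddMonoidHom i j (a - b) = 0 := hker i j (a - b) hπ
  rwa [map_sub, sub_eq_zero] at hψ

noncomputable def factor (π : GMHom S U) (hπ : π.Surjective) (ψ : GMHom S T)
    (hker : ∀ (i j : I) (x : S.A i j), π.f i j x = 0 → ψ.f i j x = 0) : GMHom U T where
  f i j y := ψ.f i j (Function.surjInv (hπ i j) y)
  map_add {i j} y₁ y₂ := by
    rw [← ψ.map_add]
    refine map_eq_map_of_ker_le hker ?_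
    rw [π.map_add]
    simp only [Function.surjInv_eq]
  map_mul {i j k} y₁ y₂ := by
    rw [← ψ.map_mul]
    refine map_eq_map_of_ker_le hker ?_
    rw [π.map_mul]
    simp only [Function.surjInv_eq]

lemma factor_surjective {π : GMHom S U} (hπ : π.Surjective) {ψ : GMHom S T}
    (hker : ∀ (i j : I) (x : S.A i j), π.f i j x = 0 → ψ.f i j x = 0) (hψ : ψ.Surjective) :
    (π.factor hπ ψ hker).Surjective := by
  intro i j t
  obtain ⟨x, rfl⟩ := hψ i j t
  exact ⟨π.f i j x, map_eq_map_of_ker_le hker (Function.surjInv_eq (hπ i j) _)⟩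

end GMHom

namespace GMIdeal

variable {S T : GammaSystem.{u, v} I}

def map (M : GMIdeal S) (ψ : GMHom S T) (hψ : ψ.Surjective) : GMIdeal T where
  B i j := (M.B i j).map (ψ.toAddMonoidHom i j)
  mul_mem_right := by
    rintro i j k _ z ⟨x, hx, rfl⟩
    obtain ⟨z, rfl⟩ := hψ j k z
    exact ⟨S.mul x z, M.mul_mem_right x z hx, ψ.map_mul x z⟩
  mul_mem_left := by
    rintro i j k x _ ⟨z, hz, rfl⟩
    obtain ⟨x, rfl⟩ := hψ i j x
    exact ⟨S.mul x z, M.mul_mem_left x z hz, ψ.map_mul x z⟩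

def toMap (M : GMIdeal S) (ψ : GMHom S T) (hψ : ψ.Surjective) :
    GMHom M.toSystem (M.map ψ hψ).toSystem where
  f i j x := ⟨ψ.f i j x.1, x.1, x.2, rfl⟩
  map_add x y := Subtype.ext (ψ.map_add x.1 y.1)
  map_mul x z := Subtype.ext (ψ.map_mul x.1 z.1)

lemma toMap_surjective (M : GMIdeal S) (ψ : GMHom S T) (hψ : ψ.Surjective) :
    (M.toMap ψ hψ).Surjective := by
  rintro i j ⟨_, x, hx, rfl⟩
  exact ⟨⟨x, hx⟩, rfl⟩

/-- The g.m.ideal `M ∩ N` of the g.m.ring `N`. -/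
def restrict (N M : GMIdeal S) : GMIdeal N.toSystem where
  B i j := (M.B i j).comap (N.B i j).subtype
  mul_mem_right x z hx := M.mul_mem_right x.1 z.1 hx
  mul_mem_left x z hz := M.mul_mem_left x.1 z.1 hz

def toRestrict (N M : GMIdeal S) (hMN : ∀ i j, M.B i j ≤ N.B i j) :
    GMHom M.toSystem (N.restrict M).toSystem where
  f i j x := ⟨⟨x.1, hMN i j x.2⟩, x.2⟩
  map_add _ _ := rfl
  map_mul _ _ := rfl

lemma toRestrict_surjective (N M : GMIdeal S) (hMN : ∀ i j, M.B i j ≤ N.B i j) :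
    (N.toRestrict M hMN).Surjective := by
  rintro i j ⟨⟨x, -⟩, hx⟩
  exact ⟨⟨x, hx⟩, rfl⟩

def comap (N : GMIdeal S) (P : GMIdeal N.quotSystem) : GMIdeal S where
  B i j := (P.B i j).comap (QuotientAddGroup.mk' (N.B i j))
  mul_mem_right x z hx := P.mul_mem_right (QuotientAddGroup.mk x) (QuotientAddGroup.mk z) hx
  mul_mem_left x z hz := P.mul_mem_left (QuotientAddGroup.mk x) (QuotientAddGroup.mk z) hz

lemma le_comap (N : GMIdeal S) (P : GMIdeal N.quotSystem) (i j : I) :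
    N.B i j ≤ (N.comap P).B i j := fun x hx => by
  change (QuotientAddGroup.mk x : S.A i j ⧸ N.B i j) ∈ P.B i j
  rw [(QuotientAddGroup.eq_zero_iff x).mpr hx]
  exact zero_mem _

def comapProj (N : GMIdeal S) (P : GMIdeal N.quotSystem) :
    GMHom (N.comap P).toSystem P.toSystem where
  f _ _ x := ⟨QuotientAddGroup.mk x.1, x.2⟩
  map_add _ _ := rfl
  map_mul _ _ := rfl

lemma comapProj_surjective (N : GMIdeal S) (P : GMIdeal N.quotSystem) :
    (N.comapProj P).Surjective := by
  rintro i j ⟨q, hq⟩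
  obtain ⟨x, rfl⟩ := QuotientAddGroup.mk_surjective q
  exact ⟨⟨x, hq⟩, rfl⟩

lemma mem_of_comapProj_eq_zero (N : GMIdeal S) (P : GMIdeal N.quotSystem) {i j : I}
    {x : (N.comap P).toSystem.A i j} (hx : (N.comapProj P).f i j x = 0) : x.1 ∈ N.B i j :=
  (QuotientAddGroup.eq_zero_iff x.1).mp (congrArg Subtype.val hx)

def iSup {ι : Type*} (M : ι → GMIdeal S) : GMIdeal S where
  B i j := ⨆ l, (M l).B i j
  mul_mem_right {i j k} x z hx := by
    have hmap : (⨆ l, (M l).B i j).map (AddMonoidHom.mk' (S.mul · z) (S.add_mul · · z))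
        ≤ ⨆ l, (M l).B i k := by
      rw [AddSubgroup.map_iSup]
      exact iSup_mono fun l => AddSubgroup.map_le_iff_le_comap.mpr
        fun y hy => (M l).mul_mem_right y z hy
    exact hmap ⟨x, hx, rfl⟩
  mul_mem_left {i j k} x z hz := by
    have hmap : (⨆ l, (M l).B j k).map (AddMonoidHom.mk' (S.mul x ·) (S.mul_add x))
        ≤ ⨆ l, (M l).B i k := by
      rw [AddSubgroup.map_iSup]
      exact iSup_mono fun l => AddSubgroup.map_le_iff_le_comap.mpr
        fun y hy => (M l).mul_mem_left x y hy
    exact hmap ⟨z, hz, rfl⟩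

end GMIdeal

variable (K : ∀ I₀ : Type u, GammaSystem.{u, v} I₀ → Prop)

namespace UpperRadicalClass

variable {K} {S T : GammaSystem.{u, v} I}

lemma of_surjective {ψ : GMHom S T} (hψ : ψ.Surjective) (hS : UpperRadicalClass K I S) :
    UpperRadicalClass K I T := by
  rintro ⟨U, χ, hχ, hU, hKU⟩
  exact hS ⟨U, χ.comp ψ, hχ.comp hψ, hU, hKU⟩

lemma restrict {N M : GMIdeal S} (hMN : ∀ i j, M.B i j ≤ N.B i j)
    (hM : UpperRadicalClass K I M.toSystem) : UpperRadicalClass K I (N.restrict M).toSystem :=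
  of_surjective (N.toRestrict_surjective M hMN) hM

lemma map_eq_zero (h1 : Q1Cond K) {ψ : GMHom S T} (hψ : ψ.Surjective) (hT : K I T)
    {M : GMIdeal S} (hM : UpperRadicalClass K I M.toSystem) {i j : I} {x : S.A i j}
    (hx : x ∈ M.B i j) : ψ.f i j x = 0 := by
  by_contra hne
  have hMψ : ¬ (M.map ψ hψ).IsZero := fun hz =>
    hne ((AddSubgroup.mem_bot).mp (hz i j ▸ ⟨x, hx, rfl⟩))
  obtain ⟨U, χ, hχ, hU, hKU⟩ := h1 I T hT _ hMψ
  exact hM ⟨U, χ.comp (M.toMap ψ hψ), hχ.comp (M.toMap_surjective ψ hψ), hU, hKU⟩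

lemma map_eq_zero_of_le (h1 : Q1Cond K) {N : GMIdeal S} {ψ : GMHom N.toSystem T}
    (hψ : ψ.Surjective) (hT : K I T) {M : GMIdeal S} (hMN : ∀ i j, M.B i j ≤ N.B i j)
    (hM : UpperRadicalClass K I M.toSystem) {i j : I} {x : N.toSystem.A i j}
    (hx : x.1 ∈ M.B i j) : ψ.f i j x = 0 :=
  map_eq_zero h1 hψ hT (restrict hMN hM) (M := N.restrict M) hx

lemma comap (h1 : Q1Cond K) {N : GMIdeal S} (hN : UpperRadicalClass K I N.toSystem)
    {P : GMIdeal N.quotSystem} (hP : UpperRadicalClass K I P.toSystem) :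
    UpperRadicalClass K I (N.comap P).toSystem := by
  rintro ⟨T, ψ, hψ, hT, hKT⟩
  have hker : ∀ (i j : I) (x : (N.comap P).toSystem.A i j),
      (N.comapProj P).f i j x = 0 → ψ.f i j x = 0 := fun i j x hx =>
    map_eq_zero_of_le h1 hψ hKT (N.le_comap P) hN (N.mem_of_comapProj_eq_zero P hx)
  exact hP ⟨T, _, GMHom.factor_surjective (N.comapProj_surjective P) hker hψ, hT, hKT⟩

end UpperRadicalClass

def upperRadical (S : GammaSystem.{u, v} I) : GMIdeal S :=
  GMIdeal.iSup fun M : { M : GMIdeal S // UpperRadicalClass K I M.toSystem } => M.1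

variable {K}

lemma le_upperRadical {S : GammaSystem.{u, v} I} {M : GMIdeal S}
    (hM : UpperRadicalClass K I M.toSystem) (i j : I) : M.B i j ≤ (upperRadical K S).B i j :=
  le_iSup (fun M : { M : GMIdeal S // UpperRadicalClass K I M.toSystem } => M.1.B i j) ⟨M, hM⟩

lemma upperRadicalClass_upperRadical (h1 : Q1Cond K) (S : GammaSystem.{u, v} I) :
    UpperRadicalClass K I (upperRadical K S).toSystem := by
  rintro ⟨T, ψ, hψ, hT, hKT⟩
  refine hT fun i j t => ?_
  obtain ⟨⟨x, hx⟩, rfl⟩ := hψ i j t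
  induction hx using AddSubgroup.iSup_induction' with
  | hp M x hxM =>
    exact UpperRadicalClass.map_eq_zero_of_le h1 hψ hKT (le_upperRadical M.2) M.2 hxM
  | h1 => exact (ψ.toAddMonoidHom i j).map_zero
  | hadd x y hx hy ihx ihy =>
    exact (ψ.map_add ⟨x, hx⟩ ⟨y, hy⟩).trans (by rw [ihx, ihy, add_zero])

lemma isZero_of_upperRadicalClass_quot (h1 : Q1Cond K) (S : GammaSystem.{u, v} I)
    {P : GMIdeal (upperRadical K S).quotSystem} (hP : UpperRadicalClass K I P.toSystem) :
    P.IsZero := by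
  have hcomap := le_upperRadical
    (UpperRadicalClass.comap h1 (upperRadicalClass_upperRadical h1 S) hP)
  refine fun i j => (AddSubgroup.eq_bot_iff_forall _).mpr fun q hq => ?_
  obtain ⟨x, rfl⟩ := QuotientAddGroup.mk_surjective q
  exact (QuotientAddGroup.eq_zero_iff x).mpr (hcomap i j hq)

end UpperRadical

/-- **Proposition 2.4.** If `K` is a class of g.m.rings satisfying (Q1) and
(Q2), then there is a radical property `r` of g.m.rings with
`K = {A | A is r-semisimple}`. -/
theorem exists_radicalProperty_of_Q1_Q2
    (K : ∀ I₀ : Type u, GammaSystem.{u, v} I₀ → Prop)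
    (h1 : Q1Cond K) (h2 : Q2Cond K) :
    ∃ r : ∀ I₀ : Type u, GammaSystem.{u, v} I₀ → Prop,
      IsGMRadicalProperty r ∧
      ∀ (I₀ : Type u) (S : GammaSystem.{u, v} I₀), K I₀ S ↔ GMSemisimple r S := by
  refine ⟨UpperRadicalClass K, ⟨fun I₀ S T ψ hψ => UpperRadicalClass.of_surjective hψ, ?_⟩, ?_⟩
  · intro I₀ S
    exact ⟨upperRadical K S,
      ⟨upperRadicalClass_upperRadical h1 S, fun M hM => le_upperRadical hM⟩,
      fun P hP => isZero_of_upperRadicalClass_quot h1 S hP⟩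
  · intro I₀ S
    refine ⟨fun hKS N hN => ?_, fun hss => h2 I₀ S fun N hN => ?_⟩
    · by_contra hnz
      exact hN (h1 I₀ S hKS N hnz)
    · by_contra hmaps
      exact hN (hss N hmaps)
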